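/- arXiv:2510.16678 — 3 statements merged into one kernel-verified Lean document; each statement's English description precedes it below -/
import Mathlib

section
/- Let a be an ordering and let x be a position with 1 ≤ x ≤ n−1. If b is the ordering obtained from a by swapping the entries at positions x and x+1, then cost(b) − cost(a) = (z_x^1(a) − z_x^0(a)) · (p_{a(x+1)} − p_{a(x)}). -/
open Finset

/-- `z1 p a j = ∏_{i=1}^{j-1} p_{a(i)}`: the probability that the first `j-1`
coins in ordering `a` all come up heads. -/
noncomputable def z1 (p : ℕ → ℝ) (a : ℕ → ℕ) (j : ℕ) : ℝ :=
  ∏ i ∈ Finset.Ico 1 j, p (a i)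

/-- `z0 p a j = ∏_{i=1}^{j-1} (1 - p_{a(i)})`: the probability that the first `j-1`
coins in ordering `a` all come up tails. -/
noncomputable def z0 (p : ℕ → ℝ) (a : ℕ → ℕ) (j : ℕ) : ℝ :=
  ∏ i ∈ Finset.Ico 1 j, (1 - p (a i))

/-- `cost n p a = 2 + Σ_{j=3}^{n} (z_j^1(a) + z_j^0(a))`. -/
noncomputable def cost (n : ℕ) (p : ℕ → ℝ) (a : ℕ → ℕ) : ℝ :=
  2 + ∑ j ∈ Finset.Icc 3 n, (z1 p a j + z0 p a j)

/-- An ordering is a permutation of the positions `{1, …, n}`. -/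
def IsOrdering (n : ℕ) (a : ℕ → ℕ) : Prop :=
  Set.BijOn a (Set.Icc 1 n) (Set.Icc 1 n)

/-- An ordering is optimal if it has minimal cost among all orderings. -/
def IsOptimal (n : ℕ) (p : ℕ → ℝ) (a : ℕ → ℕ) : Prop :=
  IsOrdering n a ∧ ∀ b : ℕ → ℕ, IsOrdering n b → cost n p a ≤ cost n p b

/-- `a` is 0-biased at position `j`: `z_j^0(a) > z_j^1(a)`. -/
def ZeroBiased (p : ℕ → ℝ) (a : ℕ → ℕ) (j : ℕ) : Prop := z1 p a j < z0 p a j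

/-- `a` is 1-biased at position `j`: `z_j^0(a) < z_j^1(a)`. -/
def OneBiased (p : ℕ → ℝ) (a : ℕ → ℕ) (j : ℕ) : Prop := z0 p a j < z1 p a j

/-- `a` is unbiased at position `j`: `z_j^0(a) = z_j^1(a)`. -/
def Unbiased (p : ℕ → ℝ) (a : ℕ → ℕ) (j : ℕ) : Prop := z0 p a j = z1 p a j

lemma prod_swap_stable (f : ℕ → ℝ) (s : Finset ℕ) {x y : ℕ} (hx : x ∈ s) (hy : y ∈ s) :
    ∏ i ∈ s, f (Equiv.swap x y i) = ∏ i ∈ s, f i := by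
  refine Finset.prod_equiv (Equiv.swap x y) (fun i => ?_) (fun i _ => rfl)
  constructor <;> intro h
  · rcases eq_or_ne i x with rfl | hix
    · simpa using hy
    rcases eq_or_ne i y with rfl | hiy
    · simpa using hx
    · rwa [Equiv.swap_apply_of_ne_of_ne hix hiy]
  · rcases eq_or_ne i x with rfl | hix
    · exact hx
    rcases eq_or_ne i y with rfl | hiy
    · exact hy
    · rwa [Equiv.swap_apply_of_ne_of_ne hix hiy] at h

/-- Cost of swapping adjacent positions: if `b` is obtained from `a` by swapping
positions `x` and `x+1`, then
`cost(b) - cost(a) = (z_x^1(a) - z_x^0(a)) * (p_{a(x+1)} - p_{a(x)})`. -/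
theorem cost_swap_adjacent (n : ℕ) (hn : 2 ≤ n) (p : ℕ → ℝ)
    (hp : ∀ i, 1 ≤ i → i ≤ n → 0 ≤ p i ∧ p i ≤ 1)
    (a : ℕ → ℕ) (ha : IsOrdering n a)
    (x : ℕ) (hx1 : 1 ≤ x) (hx2 : x ≤ n - 1)
    (b : ℕ → ℕ) (hb : b = a ∘ Equiv.swap x (x + 1)) :
    cost n p b - cost n p a =
      (z1 p a x - z0 p a x) * (p (a (x + 1)) - p (a x)) := by
  subst hb
  have hlow : ∀ (f : ℕ → ℝ) (j : ℕ), j ≤ x →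
      ∏ i ∈ Finset.Ico 1 j, f (Equiv.swap x (x + 1) i) = ∏ i ∈ Finset.Ico 1 j, f i := by
    intro f j hj
    refine Finset.prod_congr rfl fun i hi => ?_
    have hi' := Finset.mem_Ico.mp hi
    rw [Equiv.swap_apply_of_ne_of_ne (by omega) (by omega)]
  have hhigh : ∀ (f : ℕ → ℝ) (j : ℕ), x + 2 ≤ j →
      ∏ i ∈ Finset.Ico 1 j, f (Equiv.swap x (x + 1) i) = ∏ i ∈ Finset.Ico 1 j, f i := by
    intro f j hj
    exact prod_swap_stable f _ (Finset.mem_Ico.mpr ⟨hx1, by omega⟩)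
      (Finset.mem_Ico.mpr ⟨by omega, by omega⟩)
  have hsum : cost n p (a ∘ Equiv.swap x (x + 1)) - cost n p a =
      ∑ j ∈ Finset.Icc 3 n,
        ((z1 p (a ∘ Equiv.swap x (x + 1)) j + z0 p (a ∘ Equiv.swap x (x + 1)) j)
          - (z1 p a j + z0 p a j)) := by
    simp [cost, Finset.sum_sub_distrib]
  have key : ∀ j, j ≤ x ∨ x + 2 ≤ j →
      z1 p (a ∘ Equiv.swap x (x + 1)) j = z1 p a j ∧
      z0 p (a ∘ Equiv.swap x (x + 1)) j = z0 p a j := by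
    intro j hj
    rcases hj with hj | hj
    · exact ⟨hlow (fun k => p (a k)) j hj, hlow (fun k => 1 - p (a k)) j hj⟩
    · exact ⟨hhigh (fun k => p (a k)) j hj, hhigh (fun k => 1 - p (a k)) j hj⟩
  rcases eq_or_lt_of_le hx1 with h1 | h1
  · -- x = 1 : both sides are zero
    have hz : z1 p a x - z0 p a x = 0 := by
      simp [z1, z0, ← h1]
    rw [hsum, hz, zero_mul]
    refine Finset.sum_eq_zero fun j hj => ?_
    have hj' := Finset.mem_Icc.mp hj
    rw [(key j (Or.inr (by omega))).1, (key j (Or.inr (by omega))).2]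
    ring
  · -- 2 ≤ x
    have hmem : x + 1 ∈ Finset.Icc 3 n := Finset.mem_Icc.mpr ⟨by omega, by omega⟩
    rw [hsum, Finset.sum_eq_single_of_mem (x + 1) hmem ?_]
    · have e1 : z1 p (a ∘ Equiv.swap x (x + 1)) (x + 1) = z1 p a x * p (a (x + 1)) := by
        rw [z1, Finset.prod_Ico_succ_top hx1]
        have h := hlow (fun k => p (a k)) x le_rfl
        simp only [Function.comp_apply, Equiv.swap_apply_left]
        exact congrArg (· * p (a (x + 1))) h
      have e0 : z0 p (a ∘ Equiv.swap x (x + 1)) (x + 1) = z0 p a x * (1 - p (a (x + 1))) := by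
        rw [z0, Finset.prod_Ico_succ_top hx1]
        have h := hlow (fun k => 1 - p (a k)) x le_rfl
        simp only [Function.comp_apply, Equiv.swap_apply_left]
        exact congrArg (· * (1 - p (a (x + 1)))) h
      have f1 : z1 p a (x + 1) = z1 p a x * p (a x) := by
        rw [z1, Finset.prod_Ico_succ_top hx1]; rfl
      have f0 : z0 p a (x + 1) = z0 p a x * (1 - p (a x)) := by
        rw [z0, Finset.prod_Ico_succ_top hx1]; rfl
      rw [e1, e0, f1, f0]; ring
    · intro j hj hne
      have hj' := Finset.mem_Icc.mp hj
      have hjx : j ≤ x ∨ x + 2 ≤ j := by omega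
      rw [(key j hjx).1, (key j hjx).2]
      ring
end

section
/- Let a be an optimal ordering and let x be a position with 1 ≤ x ≤ n−1. If a is 0-biased at position x, then p_{a(x)} ≥ p_{a(x+1)}; if a is 1-biased at position x, then p_{a(x)} ≤ p_{a(x+1)}. In particular, within each 0-biased block of an optimal ordering the heads-probabilities are non-increasing, and within each 1-biased block they are non-decreasing. -/
open Finset

/-- In an optimal ordering, if position `x` is 0-biased then the heads-probability
does not increase from position `x` to `x+1`, and if `x` is 1-biased it does not
decrease.  In particular heads-probabilities are non-increasing within 0-biased
blocks and non-decreasing within 1-biased blocks. -/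
theorem optimal_sorted_within_block (n : ℕ) (hn : 2 ≤ n) (p : ℕ → ℝ)
    (hp : ∀ i, 1 ≤ i → i ≤ n → 0 ≤ p i ∧ p i ≤ 1)
    (a : ℕ → ℕ) (ha : IsOptimal n p a)
    (x : ℕ) (hx1 : 1 ≤ x) (hx2 : x ≤ n - 1) :
    (ZeroBiased p a x → p (a (x + 1)) ≤ p (a x)) ∧
    (OneBiased p a x → p (a x) ≤ p (a (x + 1))) := by
  rcases eq_or_lt_of_le hx1 with h1 | h1
  · -- x = 1 : both biases are impossible since both products are empty
    constructor <;> intro hb <;>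
      simp [ZeroBiased, OneBiased, z1, z0, ← h1] at hb
  · -- x ≥ 2
    have hx2' : x + 1 ≤ n := by omega
    set b : ℕ → ℕ := fun i => a (Equiv.swap x (x + 1) i) with hbdef
    have hmt : ∀ i ∈ Set.Icc 1 n, (Equiv.swap x (x + 1)) i ∈ Set.Icc 1 n := by
      intro i hi
      simp only [Set.mem_Icc] at hi ⊢
      rw [Equiv.swap_apply_def]
      split_ifs <;> omega
    have hswap : Set.BijOn (Equiv.swap x (x + 1)) (Set.Icc 1 n) (Set.Icc 1 n) := by
      refine ⟨hmt, (Equiv.injective _).injOn, ?_⟩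
      intro y hy
      exact ⟨Equiv.swap x (x + 1) y, hmt y hy, by simp⟩
    have hbord : IsOrdering n b := ha.1.comp hswap
    have hbx : b x = a (x + 1) := by simp [hbdef]
    have hbx1 : b (x + 1) = a x := by simp [hbdef]
    have hbne : ∀ i, i ≠ x → i ≠ x + 1 → b i = a i := by
      intro i hi hi'
      simp [hbdef, Equiv.swap_apply_of_ne_of_ne hi hi']
    -- products agree for j ≠ x+1
    have hz : ∀ f : ℕ → ℝ, ∀ j, j ≠ x + 1 →
        ∏ i ∈ Finset.Ico 1 j, f (b i) = ∏ i ∈ Finset.Ico 1 j, f (a i) := by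
      intro f j hj
      rcases le_or_gt j x with hle | hgt
      · refine Finset.prod_congr rfl fun i hi => ?_
        simp only [Finset.mem_Ico] at hi
        rw [hbne i (by omega) (by omega)]
      · have hj2 : x + 2 ≤ j := by omega
        refine Finset.prod_nbij' (fun i => Equiv.swap x (x + 1) i)
          (fun i => Equiv.swap x (x + 1) i) ?_ ?_ ?_ ?_ ?_
        · intro i hi
          simp only [Finset.mem_Ico] at hi ⊢
          rw [Equiv.swap_apply_def]; split_ifs <;> omega
        · intro i hi
          simp only [Finset.mem_Ico] at hi ⊢
          rw [Equiv.swap_apply_def]; split_ifs <;> omega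
        · intro i _; simp
        · intro i _; simp
        · intro i _; rfl
    have hz1 : ∀ j, j ≠ x + 1 → z1 p b j = z1 p a j := fun j hj => hz p j hj
    have hz0 : ∀ j, j ≠ x + 1 → z0 p b j = z0 p a j :=
      fun j hj => hz (fun t => 1 - p t) j hj
    -- the terms at position x+1
    have e1a : z1 p a (x + 1) = z1 p a x * p (a x) := by
      rw [z1, Finset.prod_Ico_succ_top hx1, z1]
    have e0a : z0 p a (x + 1) = z0 p a x * (1 - p (a x)) := by
      rw [z0, Finset.prod_Ico_succ_top hx1, z0]
    have e1b : z1 p b (x + 1) = z1 p a x * p (a (x + 1)) := by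
      rw [z1, Finset.prod_Ico_succ_top hx1, hbx, ← z1, hz1 x (by omega)]
    have e0b : z0 p b (x + 1) = z0 p a x * (1 - p (a (x + 1))) := by
      rw [z0, Finset.prod_Ico_succ_top hx1, hbx, ← z0, hz0 x (by omega)]
    -- optimality
    have hcost := ha.2 b hbord
    have hmem : x + 1 ∈ Finset.Icc 3 n := by
      simp only [Finset.mem_Icc]; omega
    rw [cost, cost, ← Finset.add_sum_erase _ _ hmem,
        ← Finset.add_sum_erase _ _ hmem] at hcost
    have hrest : ∑ j ∈ (Finset.Icc 3 n).erase (x + 1), (z1 p a j + z0 p a j)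
        = ∑ j ∈ (Finset.Icc 3 n).erase (x + 1), (z1 p b j + z0 p b j) := by
      refine Finset.sum_congr rfl fun j hj => ?_
      have hj' : j ≠ x + 1 := Finset.ne_of_mem_erase hj
      rw [hz1 j hj', hz0 j hj']
    rw [hrest] at hcost
    have key : z1 p a (x + 1) + z0 p a (x + 1) ≤ z1 p b (x + 1) + z0 p b (x + 1) := by
      linarith
    rw [e1a, e0a, e1b, e0b] at key
    constructor
    · intro hbias
      rw [ZeroBiased] at hbias
      nlinarith [key, hbias]
    · intro hbias
      rw [OneBiased] at hbias
      nlinarith [key, hbias]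
end

section
/- Let a be an optimal ordering. Suppose 1 ≤ x ≤ j ≤ n−1, a is 0-biased at every position y with x ≤ y ≤ j, and a is not 0-biased at position j+1; then p_{a(y)} > 1/2 for every y with x ≤ y ≤ j. Symmetrically, if a is 1-biased at every position y with x ≤ y ≤ j and a is not 1-biased at position j+1, then p_{a(y)} < 1/2 for every y with x ≤ y ≤ j. (In an optimal ordering, every non-final 0-biased block contains only coins with heads-probability greater than 1/2, and every non-final 1-biased block only coins with heads-probability less than 1/2.) -/
open Finset

lemma z1_succ (p : ℕ → ℝ) (a : ℕ → ℕ) {k : ℕ} (hk : 1 ≤ k) :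
    z1 p a (k + 1) = z1 p a k * p (a k) := by
  simp [z1, Finset.prod_Ico_succ_top hk]

lemma z0_succ (p : ℕ → ℝ) (a : ℕ → ℕ) {k : ℕ} (hk : 1 ≤ k) :
    z0 p a (k + 1) = z0 p a k * (1 - p (a k)) := by
  simp [z0, Finset.prod_Ico_succ_top hk]

lemma biased_two_le {p : ℕ → ℝ} {a : ℕ → ℕ} {k : ℕ} (h : z1 p a k ≠ z0 p a k) : 2 ≤ k := by
  by_contra h'
  have : Finset.Ico 1 k = ∅ := Finset.Ico_eq_empty (by omega)
  simp [z1, z0, this] at h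

lemma swap_ineq (n : ℕ) (p : ℕ → ℝ) (a : ℕ → ℕ) (ha : IsOptimal n p a)
    (k : ℕ) (hk2 : 2 ≤ k) (hkn : k + 1 ≤ n) :
    0 ≤ (p (a (k + 1)) - p (a k)) * (z1 p a k - z0 p a k) := by
  classical
  obtain ⟨haord, hamin⟩ := ha
  set σ : Equiv.Perm ℕ := Equiv.swap k (k + 1) with hσ
  set b : ℕ → ℕ := fun i => a (σ i) with hbdef
  have hσmem : ∀ i ∈ Set.Icc 1 n, σ i ∈ Set.Icc 1 n := by
    intro i hi
    simp only [Set.mem_Icc] at hi ⊢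
    rcases eq_or_ne i k with rfl | h1
    · rw [hσ, Equiv.swap_apply_left]; omega
    rcases eq_or_ne i (k + 1) with rfl | h2
    · rw [hσ, Equiv.swap_apply_right]; omega
    · rw [hσ, Equiv.swap_apply_of_ne_of_ne h1 h2]; exact hi
  have hbord : IsOrdering n b := by
    refine Set.BijOn.comp haord ⟨hσmem, (Equiv.injective σ).injOn, ?_⟩
    intro y hy
    exact ⟨σ y, hσmem y hy, Equiv.swap_apply_self _ _ _⟩
  have hb_eq : ∀ i, i ≠ k → i ≠ k + 1 → b i = a i := by
    intro i h1 h2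
    simp [hbdef, hσ, Equiv.swap_apply_of_ne_of_ne h1 h2]
  have hbk : b k = a (k + 1) := by simp [hbdef, hσ]
  have hbk1 : b (k + 1) = a k := by simp [hbdef, hσ]
  have key : ∀ (f : ℕ → ℝ) (m : ℕ), m ≠ k + 1 →
      ∏ i ∈ Finset.Ico 1 m, f (b i) = ∏ i ∈ Finset.Ico 1 m, f (a i) := by
    intro f m hm
    rcases le_or_gt m k with h | h
    · refine Finset.prod_congr rfl ?_
      intro i hi
      simp only [Finset.mem_Ico] at hi
      rw [hb_eq i (by omega) (by omega)]
    · have hm2 : k + 2 ≤ m := by omega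
      refine Finset.prod_nbij' (fun i => σ i) (fun i => σ i) ?_ ?_ ?_ ?_ ?_
      · intro i hi
        simp only [Finset.mem_Ico] at hi ⊢
        rcases eq_or_ne i k with rfl | h1
        · rw [hσ, Equiv.swap_apply_left]; omega
        rcases eq_or_ne i (k + 1) with rfl | h2
        · rw [hσ, Equiv.swap_apply_right]; omega
        · rw [hσ, Equiv.swap_apply_of_ne_of_ne h1 h2]; omega
      · intro i hi
        simp only [Finset.mem_Ico] at hi ⊢
        rcases eq_or_ne i k with rfl | h1
        · rw [hσ, Equiv.swap_apply_left]; omega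
        rcases eq_or_ne i (k + 1) with rfl | h2
        · rw [hσ, Equiv.swap_apply_right]; omega
        · rw [hσ, Equiv.swap_apply_of_ne_of_ne h1 h2]; omega
      · intro i _; exact Equiv.swap_apply_self _ _ _
      · intro i _; exact Equiv.swap_apply_self _ _ _
      · intro i _; rfl
  have hz1b : z1 p b (k + 1) = z1 p a k * p (a (k + 1)) := by
    rw [z1_succ p b (by omega), hbk]
    congr 1
    exact key p k (by omega)
  have hz0b : z0 p b (k + 1) = z0 p a k * (1 - p (a (k + 1))) := by
    rw [z0_succ p b (by omega), hbk]
    congr 1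
    exact key (fun i => 1 - p i) k (by omega)
  have hcost := hamin b hbord
  have hk1mem : k + 1 ∈ Finset.Icc 3 n := by
    simp only [Finset.mem_Icc]; omega
  have hsa : ∑ m ∈ Finset.Icc 3 n, (z1 p a m + z0 p a m)
      = (z1 p a (k + 1) + z0 p a (k + 1))
        + ∑ m ∈ (Finset.Icc 3 n).erase (k + 1), (z1 p a m + z0 p a m) :=
    (Finset.add_sum_erase _ _ hk1mem).symm
  have hsb : ∑ m ∈ Finset.Icc 3 n, (z1 p b m + z0 p b m)
      = (z1 p b (k + 1) + z0 p b (k + 1))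
        + ∑ m ∈ (Finset.Icc 3 n).erase (k + 1), (z1 p b m + z0 p b m) :=
    (Finset.add_sum_erase _ _ hk1mem).symm
  have hrest : ∑ m ∈ (Finset.Icc 3 n).erase (k + 1), (z1 p b m + z0 p b m)
      = ∑ m ∈ (Finset.Icc 3 n).erase (k + 1), (z1 p a m + z0 p a m) := by
    refine Finset.sum_congr rfl ?_
    intro m hm
    have hm' : m ≠ k + 1 := (Finset.mem_erase.mp hm).1
    rw [show z1 p b m = z1 p a m from key p m hm',
        show z0 p b m = z0 p a m from key (fun i => 1 - p i) m hm']
  have hineq : z1 p a (k + 1) + z0 p a (k + 1)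
      ≤ z1 p b (k + 1) + z0 p b (k + 1) := by
    have := hcost
    unfold cost at this
    rw [hsa, hsb, hrest] at this
    linarith
  rw [hz1b, hz0b, z1_succ p a (by omega), z0_succ p a (by omega)] at hineq
  nlinarith [hineq]

/-- In an optimal ordering, a non-final 0-biased block only contains coins with
heads-probability greater than 1/2, and a non-final 1-biased block only coins
with heads-probability less than 1/2. -/
theorem optimal_nonfinal_block_prob (n : ℕ) (hn : 2 ≤ n) (p : ℕ → ℝ)
    (hp : ∀ i, 1 ≤ i → i ≤ n → 0 ≤ p i ∧ p i ≤ 1)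
    (a : ℕ → ℕ) (ha : IsOptimal n p a)
    (x j : ℕ) (hx : 1 ≤ x) (hxj : x ≤ j) (hj : j ≤ n - 1) :
    ((∀ y, x ≤ y → y ≤ j → ZeroBiased p a y) → ¬ ZeroBiased p a (j + 1) →
      ∀ y, x ≤ y → y ≤ j → 1 / 2 < p (a y)) ∧
    ((∀ y, x ≤ y → y ≤ j → OneBiased p a y) → ¬ OneBiased p a (j + 1) →
      ∀ y, x ≤ y → y ≤ j → p (a y) < 1 / 2) := by
  have hjn : j + 1 ≤ n := by omega
  -- bounds on coins at positions in [1,n]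
  have hpa : ∀ i, 1 ≤ i → i ≤ n → 0 ≤ p (a i) ∧ p (a i) ≤ 1 := by
    intro i h1 h2
    have := ha.1.mapsTo (Set.mem_Icc.mpr ⟨h1, h2⟩)
    exact hp (a i) (Set.mem_Icc.mp this).1 (Set.mem_Icc.mp this).2
  have hz1nn : 0 ≤ z1 p a j := by
    apply Finset.prod_nonneg
    intro i hi
    simp only [Finset.mem_Ico] at hi
    exact (hpa i hi.1 (by omega)).1
  have hz0nn : 0 ≤ z0 p a j := by
    apply Finset.prod_nonneg
    intro i hi
    simp only [Finset.mem_Ico] at hi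
    linarith [(hpa i hi.1 (by omega)).2]
  have hj1 : 1 ≤ j := le_trans hx hxj
  have hpj := hpa j hj1 (by omega)
  constructor
  · intro hblock hnot y hxy hyj
    by_contra hle
    push_neg at hle
    -- p's nonincreasing along the block
    have chain : ∀ m, y ≤ m → m ≤ j → p (a m) ≤ p (a y) := by
      intro m hm
      induction m, hm using Nat.le_induction with
      | base => intro _; exact le_rfl
      | succ m hym ih =>
        intro hmj
        have hz : ZeroBiased p a m := hblock m (le_trans hxy hym) (by omega)
        have hk2 : 2 ≤ m := biased_two_le (ne_of_lt hz)
        have hk := swap_ineq n p a ha m hk2 (by omega)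
        have hlt : z1 p a m < z0 p a m := hz
        have h1 : p (a (m + 1)) ≤ p (a m) := by nlinarith
        linarith [ih (by omega)]
    have hpj2 : p (a j) ≤ 1 / 2 := le_trans (chain j hyj le_rfl) hle
    have hZ : z1 p a j < z0 p a j := hblock j (le_trans hxy hyj) le_rfl
    refine hnot ?_
    show z1 p a (j + 1) < z0 p a (j + 1)
    rw [z1_succ p a hj1, z0_succ p a hj1]
    nlinarith [hpj.1]
  · intro hblock hnot y hxy hyj
    by_contra hle
    push_neg at hle
    have chain : ∀ m, y ≤ m → m ≤ j → p (a y) ≤ p (a m) := by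
      intro m hm
      induction m, hm using Nat.le_induction with
      | base => intro _; exact le_rfl
      | succ m hym ih =>
        intro hmj
        have hz : OneBiased p a m := hblock m (le_trans hxy hym) (by omega)
        have hk2 : 2 ≤ m := biased_two_le (ne_of_gt hz)
        have hk := swap_ineq n p a ha m hk2 (by omega)
        have hlt : z0 p a m < z1 p a m := hz
        have h1 : p (a m) ≤ p (a (m + 1)) := by nlinarith
        linarith [ih (by omega)]
    have hpj2 : 1 / 2 ≤ p (a j) := le_trans hle (chain j hyj le_rfl)
    have hZ : z0 p a j < z1 p a j := hblock j (le_trans hxy hyj) le_rfl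
    refine hnot ?_
    show z0 p a (j + 1) < z1 p a (j + 1)
    rw [z1_succ p a hj1, z0_succ p a hj1]
    nlinarith [hpj.2]
end
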